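/- arXiv:1010.2984 — 3 statements merged into one kernel-verified Lean document; each statement's English description precedes it below -/
import Mathlib

section
/- Consider the system dn¹¹/dt = r̄·n¹¹n¹²/(n¹¹+n¹²) − d·n¹¹, dn¹²/dt = r̄·n¹¹n¹²/(n¹¹+n¹²) − d·n¹² on (0,∞)² with r̄ < 2d. Then lim_{t→∞} n¹¹(t) = lim_{t→∞} n¹²(t) = 0. -/
/-! The total population `S = n¹¹ + n¹²` satisfies `S' = 2 r̄ n¹¹ n¹² / S - d S ≤ (r̄ / 2 - d) S`,
because `n¹¹ n¹² / (n¹¹ + n¹²)` is at most a quarter of `n¹¹ + n¹²` (AM–GM). As `r̄ / 2 - d < 0`,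
Grönwall's inequality makes `S` decay exponentially, and both positive summands decay with it. -/

open Real Filter Topology

lemma mul_div_add_le_add_div_four {a b : ℝ} (ha : 0 ≤ a) (hb : 0 ≤ b) :
    a * b / (a + b) ≤ (a + b) / 4 := by
  rcases (add_nonneg ha hb).eq_or_lt with hab | hab
  · rw [← hab]; simp
  · rw [div_le_div_iff₀ hab four_pos]
    nlinarith [sq_nonneg (a - b)]

section Gronwall

variable {f f' : ℝ → ℝ} {c : ℝ}

lemma antitone_mul_exp_of_hasDerivAt_le (hf : ∀ t, HasDerivAt f (f' t) t)
    (hle : ∀ t, f' t ≤ c * f t) : Antitone fun t => f t * exp (-c * t) := by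
  have hg : ∀ t, HasDerivAt (fun t => f t * exp (-c * t))
      (f' t * exp (-c * t) + f t * (exp (-c * t) * -c)) t := fun t =>
    (hf t).mul (by simpa using ((hasDerivAt_id t).const_mul (-c)).exp)
  refine antitone_of_deriv_nonpos (fun t => (hg t).differentiableAt) fun t => ?_
  rw [(hg t).deriv]
  nlinarith [hle t, exp_pos (-c * t)]

lemma le_mul_exp_of_hasDerivAt_le (hf : ∀ t, HasDerivAt f (f' t) t)
    (hle : ∀ t, f' t ≤ c * f t) {t : ℝ} (ht : 0 ≤ t) : f t ≤ f 0 * exp (c * t) := by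
  have hmono := antitone_mul_exp_of_hasDerivAt_le hf hle ht
  have hfactor : f t = f t * exp (-c * t) * exp (c * t) := by
    rw [mul_assoc, ← exp_add]; simp
  rw [hfactor]
  simpa using mul_le_mul_of_nonneg_right hmono (exp_pos (c * t)).le

end Gronwall

lemma tendsto_zero_of_nonneg_of_le_mul_exp {f : ℝ → ℝ} {C c : ℝ} (hc : c < 0)
    (hnonneg : ∀ᶠ t in atTop, 0 ≤ f t) (hle : ∀ᶠ t in atTop, f t ≤ C * exp (c * t)) :
    Tendsto f atTop (𝓝 0) := by
  have hexp : Tendsto (fun t => C * exp (c * t)) atTop (𝓝 0) := by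
    simpa using (tendsto_exp_atBot.comp (tendsto_id.const_mul_atTop_of_neg hc)).const_mul C
  exact tendsto_of_tendsto_of_tendsto_of_le_of_le' tendsto_const_nhds hexp hnonneg hle

theorem stmt7_general (r d : ℝ) (hr : 0 < r) (hsub : r < 2 * d) (n11 n12 : ℝ → ℝ)
    (hpos1 : ∀ t, 0 < n11 t) (hpos2 : ∀ t, 0 < n12 t)
    (hode1 : ∀ t, HasDerivAt n11 (r * n11 t * n12 t / (n11 t + n12 t) - d * n11 t) t)
    (hode2 : ∀ t, HasDerivAt n12 (r * n11 t * n12 t / (n11 t + n12 t) - d * n12 t) t) :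
    Tendsto n11 atTop (nhds 0) ∧ Tendsto n12 atTop (nhds 0) := by
  set S : ℝ → ℝ := fun t => n11 t + n12 t
  have hS_le : ∀ t, 2 * r * (n11 t * n12 t / S t) - d * S t ≤ (r / 2 - d) * S t := fun t => by
    nlinarith [mul_div_add_le_add_div_four (hpos1 t).le (hpos2 t).le]
  have hS_deriv : ∀ t, HasDerivAt S (2 * r * (n11 t * n12 t / S t) - d * S t) t := fun t =>
    ((hode1 t).add (hode2 t)).congr_deriv (by ring)
  have hS_lim : Tendsto S atTop (𝓝 0) :=
    tendsto_zero_of_nonneg_of_le_mul_exp (by linarith)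
      (.of_forall fun t => (add_pos (hpos1 t) (hpos2 t)).le)
      ((eventually_ge_atTop 0).mono fun _ => le_mul_exp_of_hasDerivAt_le hS_deriv hS_le)
  exact ⟨squeeze_zero (fun t => (hpos1 t).le)
      (fun t => le_add_of_nonneg_right (hpos2 t).le) hS_lim,
    squeeze_zero (fun t => (hpos2 t).le) (fun t => le_add_of_nonneg_left (hpos1 t).le) hS_lim⟩

theorem stmt7 (r d : ℝ) (hr : 0 < r) (hd : 0 < d) (hsub : r < 2 * d) (n11 n12 : ℝ → ℝ)
    (hpos1 : ∀ t, 0 < n11 t) (hpos2 : ∀ t, 0 < n12 t)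
    (hode1 : ∀ t, HasDerivAt n11 (r * n11 t * n12 t / (n11 t + n12 t) - d * n11 t) t)
    (hode2 : ∀ t, HasDerivAt n12 (r * n11 t * n12 t / (n11 t + n12 t) - d * n12 t) t) :
    Tendsto n11 atTop (nhds 0) ∧ Tendsto n12 atTop (nhds 0) :=
  stmt7_general r d hr hsub n11 n12 hpos1 hpos2 hode1 hode2
end

section
/- Consider the system dn¹¹/dt = r̄·n¹¹n¹²/(n¹¹+n¹²) − d·n¹¹, dn¹²/dt = r̄·n¹¹n¹²/(n¹¹+n¹²) − d·n¹² on (0,∞)² with r̄ > 2d and initial condition in (0,∞)². Then both n¹¹(t) → +∞ and n¹²(t) → +∞ as t → ∞. -/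
/-!
The product `P = n¹¹ n¹²` solves the linear equation `P' = (r̄ - 2d) P`, because the
frequency-dependent birth terms contribute `r̄ P (n¹¹ + n¹²) / (n¹¹ + n¹²) = r̄ P`; hence `P` grows
like `exp ((r̄ - 2d) t)`. The difference `n¹¹ - n¹²` solves `D' = -d D`, so it stays bounded.
A product tending to infinity whose factors differ by a bounded amount forces both factors to
infinity.
-/

open Real Filter

theorem eq_mul_exp_of_hasDerivAt {f : ℝ → ℝ} {a : ℝ} (hf : ∀ t, HasDerivAt f (a * f t) t)
    (t : ℝ) : f t = f 0 * exp (a * t) := by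
  have hg : ∀ s, HasDerivAt (fun s => exp (-(a * s)) * f s) 0 s := fun s => by
    have hexp : HasDerivAt (fun s => exp (-(a * s))) (exp (-(a * s)) * -(a * 1)) s :=
      ((hasDerivAt_id s).const_mul a).neg.exp
    exact (hexp.mul (hf s)).congr_deriv (by ring)
  have hconst := is_const_of_deriv_eq_zero (fun s => (hg s).differentiableAt)
    (fun s => (hg s).deriv) t 0
  simp only [mul_zero, neg_zero, exp_zero, one_mul] at hconst
  rw [← hconst, mul_comm (exp _), mul_assoc, ← exp_add, neg_add_cancel, exp_zero, mul_one]

theorem Filter.Tendsto.atTop_of_mul_le_add {α : Type*} {l : Filter α} {f g : α → ℝ} {C : ℝ}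
    (h : Tendsto (fun x => f x * g x) l atTop) (hg : ∀ᶠ x in l, 0 ≤ g x)
    (hfg : ∀ᶠ x in l, f x ≤ g x + C) : Tendsto g l atTop := by
  have hsqrt : Tendsto (fun x => √(f x * g x) - |C|) l atTop :=
    tendsto_atTop_add_const_right _ _ (tendsto_sqrt_atTop.comp h)
  refine tendsto_atTop_mono' l ?_ hsqrt
  filter_upwards [hg, hfg] with x hgx hfgx
  have hsq : f x * g x ≤ (g x + |C|) ^ 2 := by
    nlinarith [le_abs_self C, abs_nonneg C]
  have := sqrt_le_sqrt hsq
  rw [sqrt_sq (by positivity)] at this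
  linarith

section FecunditySelection

variable {r d t : ℝ} {n11 n12 : ℝ → ℝ}

theorem hasDerivAt_mul_of_fecundity
    (hode1 : HasDerivAt n11 (r * n11 t * n12 t / (n11 t + n12 t) - d * n11 t) t)
    (hode2 : HasDerivAt n12 (r * n11 t * n12 t / (n11 t + n12 t) - d * n12 t) t)
    (hsum : n11 t + n12 t ≠ 0) :
    HasDerivAt (fun t => n11 t * n12 t) ((r - 2 * d) * (n11 t * n12 t)) t := by
  refine (hode1.mul hode2).congr_deriv ?_
  field_simp
  ring

theorem hasDerivAt_sub_of_fecundity
    (hode1 : HasDerivAt n11 (r * n11 t * n12 t / (n11 t + n12 t) - d * n11 t) t)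
    (hode2 : HasDerivAt n12 (r * n11 t * n12 t / (n11 t + n12 t) - d * n12 t) t) :
    HasDerivAt (fun t => n11 t - n12 t) (-d * (n11 t - n12 t)) t :=
  (hode1.sub hode2).congr_deriv (by ring)

end FecunditySelection

theorem stmt8_general (r d : ℝ) (hd : 0 < d) (hsup : 2 * d < r) (n11 n12 : ℝ → ℝ)
    (hpos1 : ∀ t, 0 < n11 t) (hpos2 : ∀ t, 0 < n12 t)
    (hode1 : ∀ t, HasDerivAt n11 (r * n11 t * n12 t / (n11 t + n12 t) - d * n11 t) t)
    (hode2 : ∀ t, HasDerivAt n12 (r * n11 t * n12 t / (n11 t + n12 t) - d * n12 t) t) :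
    Tendsto n11 atTop atTop ∧ Tendsto n12 atTop atTop := by
  have hprod : Tendsto (fun t => n11 t * n12 t) atTop atTop := by
    have hexp : Tendsto (fun t => n11 0 * n12 0 * exp ((r - 2 * d) * t)) atTop atTop :=
      (tendsto_exp_atTop.comp (tendsto_id.const_mul_atTop (by linarith))).const_mul_atTop
        (mul_pos (hpos1 0) (hpos2 0))
    refine hexp.congr fun t => (eq_mul_exp_of_hasDerivAt (fun t => hasDerivAt_mul_of_fecundity
      (hode1 t) (hode2 t) (add_pos (hpos1 t) (hpos2 t)).ne') t).symm
  have hdiff : ∀ᶠ t in atTop, |n11 t - n12 t| ≤ |n11 0 - n12 0| := by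
    filter_upwards [eventually_ge_atTop 0] with t ht
    rw [eq_mul_exp_of_hasDerivAt (fun t => hasDerivAt_sub_of_fecundity (hode1 t) (hode2 t)) t,
      abs_mul, abs_of_pos (exp_pos _)]
    exact mul_le_of_le_one_right (abs_nonneg _) (exp_le_one_iff.mpr (by nlinarith))
  constructor
  · refine Tendsto.atTop_of_mul_le_add (f := n12) (C := |n11 0 - n12 0|)
      (by simpa only [mul_comm] using hprod) (.of_forall fun t => (hpos1 t).le) ?_
    filter_upwards [hdiff] with t ht
    linarith [neg_abs_le (n11 t - n12 t)]
  · refine hprod.atTop_of_mul_le_add (C := |n11 0 - n12 0|) (.of_forall fun t => (hpos2 t).le) ?_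
    filter_upwards [hdiff] with t ht
    linarith [le_abs_self (n11 t - n12 t)]

theorem stmt8 (r d : ℝ) (hr : 0 < r) (hd : 0 < d) (hsup : 2 * d < r) (n11 n12 : ℝ → ℝ)
    (hpos1 : ∀ t, 0 < n11 t) (hpos2 : ∀ t, 0 < n12 t)
    (hode1 : ∀ t, HasDerivAt n11 (r * n11 t * n12 t / (n11 t + n12 t) - d * n11 t) t)
    (hode2 : ∀ t, HasDerivAt n12 (r * n11 t * n12 t / (n11 t + n12 t) - d * n12 t) t) :
    Tendsto n11 atTop atTop ∧ Tendsto n12 atTop atTop :=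
  stmt8_general r d hd hsup n11 n12 hpos1 hpos2 hode1 hode2
end

section
/- Consider the ODE dn/dt = [(1−δ)s·r̄ + (1−s)·r̄·e^{αn}/(β+e^{αn}) − d]·n with r̄, d, α, β > 0, s, δ ∈ [0,1]. If r̄(1−δs) < d, then every solution started in (0,∞) converges to 0 as t → ∞. -/
/-!
The pollen-limitation factor `e^{αn}/(β+e^{αn})` is at most `1`, so the per-capita growth rate
never exceeds `r(1 - δs) - d = -c < 0`. Then `n t · e^{ct}` is non-increasing, which gives
`0 < n t ≤ n 0 · e^{-ct}` for `t ≥ 0`.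
-/

open Real Filter Topology

section DifferentialInequality

variable {n n' : ℝ → ℝ} {c : ℝ}

theorem antitone_mul_exp_of_deriv_le_neg_mul (hn : ∀ t, HasDerivAt n (n' t) t)
    (hle : ∀ t, n' t ≤ -c * n t) : Antitone fun t => n t * exp (c * t) := by
  have hderiv : ∀ t, HasDerivAt (fun t => n t * exp (c * t))
      (n' t * exp (c * t) + n t * (exp (c * t) * c)) t := fun t => by
    have h := (hn t).mul (((hasDerivAt_id t).const_mul c).exp)
    rw [mul_one] at h
    exact h
  refine antitone_of_deriv_nonpos (fun t => (hderiv t).differentiableAt) fun t => ?_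
  rw [(hderiv t).deriv, show n' t * exp (c * t) + n t * (exp (c * t) * c)
    = exp (c * t) * (n' t + c * n t) by ring]
  exact mul_nonpos_of_nonneg_of_nonpos (exp_pos _).le (by linarith [hle t])

theorem le_mul_exp_neg_of_deriv_le_neg_mul (hn : ∀ t, HasDerivAt n (n' t) t)
    (hle : ∀ t, n' t ≤ -c * n t) {t : ℝ} (ht : 0 ≤ t) : n t ≤ n 0 * exp (-(c * t)) := by
  have h : n t * exp (c * t) ≤ n 0 * exp (c * 0) :=
    antitone_mul_exp_of_deriv_le_neg_mul hn hle ht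
  rw [mul_zero, exp_zero, mul_one] at h
  rw [exp_neg, ← div_eq_mul_inv, le_div_iff₀ (exp_pos _)]
  exact h

theorem tendsto_zero_of_deriv_le_neg_mul (hc : 0 < c) (hnonneg : ∀ t, 0 ≤ n t)
    (hn : ∀ t, HasDerivAt n (n' t) t) (hle : ∀ t, n' t ≤ -c * n t) :
    Tendsto n atTop (𝓝 0) := by
  have hdecay : Tendsto (fun t => n 0 * exp (-(c * t))) atTop (𝓝 0) := by
    simpa using (tendsto_exp_neg_atTop_nhds_zero.comp
      (tendsto_id.const_mul_atTop hc)).const_mul (n 0)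
  refine tendsto_of_tendsto_of_tendsto_of_le_of_le' tendsto_const_nhds hdecay
    (Eventually.of_forall hnonneg) ?_
  filter_upwards [eventually_ge_atTop 0] with t ht
  exact le_mul_exp_neg_of_deriv_le_neg_mul hn hle ht

end DifferentialInequality

theorem scid_rate_le {r β s : ℝ} (δ d x : ℝ) (hr : 0 ≤ r) (hβ : 0 ≤ β) (hs : s ≤ 1) :
    (1 - δ) * s * r + (1 - s) * r * exp x / (β + exp x) - d ≤ r * (1 - δ * s) - d := by
  have hfrac : exp x / (β + exp x) ≤ 1 :=
    (div_le_one (by positivity)).2 (le_add_of_nonneg_left hβ)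
  have h : (1 - s) * r * (exp x / (β + exp x)) ≤ (1 - s) * r :=
    mul_le_of_le_one_right (mul_nonneg (by linarith) hr) hfrac
  rw [mul_div_assoc]
  linarith

theorem stmt10_general (r d α β s δ : ℝ) (hr : 0 < r) (hβ : 0 < β)
    (hs : s ∈ Set.Icc (0 : ℝ) 1)
    (hsub : r * (1 - δ * s) < d)
    (n : ℝ → ℝ) (hpos : ∀ t, 0 < n t)
    (hode : ∀ t, HasDerivAt n
      (((1 - δ) * s * r + (1 - s) * r * exp (α * n t) / (β + exp (α * n t)) - d) * n t) t) :
    Tendsto n atTop (nhds 0) := by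
  refine tendsto_zero_of_deriv_le_neg_mul (c := d - r * (1 - δ * s)) (by linarith)
    (fun t => (hpos t).le) hode fun t => ?_
  rw [neg_sub]
  exact mul_le_mul_of_nonneg_right (scid_rate_le δ d _ hr.le hβ.le hs.2) (hpos t).le

theorem stmt10 (r d α β s δ : ℝ) (hr : 0 < r) (hd : 0 < d) (hα : 0 < α) (hβ : 0 < β)
    (hs : s ∈ Set.Icc (0 : ℝ) 1) (hδ : δ ∈ Set.Icc (0 : ℝ) 1)
    (hsub : r * (1 - δ * s) < d)
    (n : ℝ → ℝ) (hpos : ∀ t, 0 < n t)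
    (hode : ∀ t, HasDerivAt n
      (((1 - δ) * s * r + (1 - s) * r * exp (α * n t) / (β + exp (α * n t)) - d) * n t) t) :
    Tendsto n atTop (nhds 0) :=
  stmt10_general r d α β s δ hr hβ hs hsub n hpos hode
end
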